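/- Let G be a weighted graph on N vertices with combinatorial Laplacian L, let μ be a finitely supported probability distribution on the set of contracted matchings of G with edge-contraction probabilities q_{ij}, and let x ∈ ℝ^N be a unit eigenvector of L with eigenvalue λ > 0. Suppose λ ≤ (d_i + d_j + 2 W(i,j))/4 for every edge {i,j} of G, and set ϑ = max_{{i,j} ∈ E} { q_{ij} (d_i + d_j + 2(W(i,j) − 2λ)) / W(i,j) }. Then for every ε > 0, μ({ E_F : λ ≤ xᵀ Π_F L Π_F x ≤ (1 + ε) λ }) ≥ 1 − ϑ/(4ε). -/

import Mathlib

open Matrix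

/-- The combinatorial Laplacian `L = D - W`. -/
def lap {N : ℕ} (W : Matrix (Fin N) (Fin N) ℝ) : Matrix (Fin N) (Fin N) ℝ :=
  Matrix.diagonal (fun i => ∑ j, W i j) - W

/-- `W` is the weight matrix of a weighted graph: symmetric, nonnegative, zero diagonal. -/
def IsWeightedGraph {N : ℕ} (W : Matrix (Fin N) (Fin N) ℝ) : Prop :=
  (∀ i j, W i j = W j i) ∧ (∀ i j, 0 ≤ W i j) ∧ (∀ i, W i i = 0)

/-- A contracted matching of the weighted graph given by `W`: a finite set of edges
(each recorded once, as an ordered pair `(i,j)` with `W i j > 0` and `i ≠ j`) such that for any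
two distinct edges `{i,j}`, `{p,q}` all of `W i p`, `W i q`, `W j p`, `W j q` vanish
(in particular the edges are vertex-disjoint, and no vertex of one edge is adjacent to a vertex
of another one). -/
def IsContractedMatching {N : ℕ} (W : Matrix (Fin N) (Fin N) ℝ)
    (EF : Finset (Fin N × Fin N)) : Prop :=
  (∀ e ∈ EF, e.1 ≠ e.2 ∧ 0 < W e.1 e.2) ∧
  (∀ e ∈ EF, ∀ e' ∈ EF, e ≠ e' →
    W e.1 e'.1 = 0 ∧ W e.1 e'.2 = 0 ∧ W e.2 e'.1 = 0 ∧ W e.2 e'.2 = 0)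

open scoped Classical in
/-- The averaging projection `Π_F` associated with a (vertex-disjoint) set of edges `E_F`:
`(Π_F x)(i) = (Π_F x)(j) = (x(i)+x(j))/2` for every `{i,j} ∈ E_F`, and `(Π_F x)(ℓ) = x(ℓ)` for
every vertex `ℓ` not incident to an edge of `E_F`. -/
noncomputable def avgProj {N : ℕ} (EF : Finset (Fin N × Fin N)) :
    Matrix (Fin N) (Fin N) ℝ :=
  Matrix.of fun a b =>
    if a = b then (if ∃ e ∈ EF, a = e.1 ∨ a = e.2 then (1 : ℝ) / 2 else 1)
    else if (a, b) ∈ EF ∨ (b, a) ∈ EF then 1 / 2 else 0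

open scoped Classical in
/-- Given a finitely supported distribution on contracted matchings, described by a finite
support `Ω` and a weight function `p`, the edge-contraction probability
`q_{ij} = μ({E_F : {i,j} ∈ E_F})` of the (unordered) edge `{i,j}`. -/
noncomputable def edgeProb {N : ℕ} (Ω : Finset (Finset (Fin N × Fin N)))
    (p : Finset (Fin N × Fin N) → ℝ) (i j : Fin N) : ℝ :=
  ∑ F ∈ Ω.filter (fun F => (i, j) ∈ F ∨ (j, i) ∈ F), p F

section AuxRSS

open scoped Classical

variable {N : ℕ} {W : Matrix (Fin N) (Fin N) ℝ}

lemma matching_vertex_disjoint (hsym : ∀ i j, W i j = W j i)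
    {F : Finset (Fin N × Fin N)} (hF : IsContractedMatching W F) :
    ∀ e ∈ F, ∀ e' ∈ F, e ≠ e' → e.1 ≠ e'.1 ∧ e.1 ≠ e'.2 ∧ e.2 ≠ e'.1 ∧ e.2 ≠ e'.2 := by
  intro e he e' he' hne
  obtain ⟨h1, h2, h3, h4⟩ := hF.2 e he e' he' hne
  have hpos := (hF.1 e' he').2
  refine ⟨fun h => ?_, fun h => ?_, fun h => ?_, fun h => ?_⟩
  · rw [h] at h2; linarith
  · rw [h] at h1; rw [hsym e'.2 e'.1] at h1; linarith
  · rw [h] at h4; linarith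
  · rw [h] at h3; rw [hsym e'.2 e'.1] at h3; linarith

lemma avgProj_row (hsym : ∀ i j, W i j = W j i) {F : Finset (Fin N × Fin N)}
    (hF : IsContractedMatching W F) {e₀ : Fin N × Fin N} (he₀ : e₀ ∈ F)
    {a b₀ : Fin N} (hab : (a = e₀.1 ∧ b₀ = e₀.2) ∨ (a = e₀.2 ∧ b₀ = e₀.1)) :
    ∀ b, avgProj F a b =
      (if b = a then 1/2 else 0) + (if b = b₀ then 1/2 else 0) := by
  have hdisj := matching_vertex_disjoint hsym hF
  have hne0 : e₀.1 ≠ e₀.2 := (hF.1 e₀ he₀).1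
  have hab0 : a ≠ b₀ := by
    rcases hab with ⟨h1, h2⟩ | ⟨h1, h2⟩ <;> rw [h1, h2]
    · exact hne0
    · exact hne0.symm
  have hmatched : ∃ e ∈ F, a = e.1 ∨ a = e.2 := by
    rcases hab with ⟨h1, _⟩ | ⟨h1, _⟩
    · exact ⟨e₀, he₀, Or.inl h1⟩
    · exact ⟨e₀, he₀, Or.inr h1⟩
  have hpartner : ∀ b, ((a, b) ∈ F ∨ (b, a) ∈ F) ↔ b = b₀ := by
    intro b
    constructor
    · rintro (hb | hb)
      · by_cases hee : (a, b) = e₀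
        · have hh1 : a = e₀.1 := congrArg Prod.fst hee
          have hh2 : b = e₀.2 := congrArg Prod.snd hee
          rcases hab with ⟨h1, h2⟩ | ⟨h1, h2⟩
          · rw [hh2, h2]
          · exact absurd (h1 ▸ hh1 : e₀.2 = e₀.1) hne0.symm
        · have := (hdisj _ hb e₀ he₀ hee)
          rcases hab with ⟨h1, _⟩ | ⟨h1, _⟩
          · exact absurd h1 this.1
          · exact absurd h1 this.2.1
      · by_cases hee : (b, a) = e₀
        · have hh1 : b = e₀.1 := congrArg Prod.fst hee
          have hh2 : a = e₀.2 := congrArg Prod.snd hee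
          rcases hab with ⟨h1, h2⟩ | ⟨h1, h2⟩
          · exact absurd (h1 ▸ hh2 : e₀.1 = e₀.2) hne0
          · rw [hh1, h2]
        · have := (hdisj _ hb e₀ he₀ hee)
          rcases hab with ⟨h1, _⟩ | ⟨h1, _⟩
          · exact absurd h1 this.2.2.1
          · exact absurd h1 this.2.2.2
    · rintro rfl
      rcases hab with ⟨h1, h2⟩ | ⟨h1, h2⟩
      · left; rw [h1, h2]; exact he₀
      · right; rw [h2, h1]; exact he₀
  intro b
  by_cases hd : a = b
  · subst hd
    simp only [avgProj, Matrix.of_apply, if_pos rfl, if_pos hmatched]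
    simp [hab0]
  · have hd' : ¬ (b = a) := fun h => hd h.symm
    simp only [avgProj, Matrix.of_apply, if_neg hd, if_neg hd']
    by_cases hb : b = b₀
    · rw [if_pos ((hpartner b).mpr hb), if_pos hb]; norm_num
    · rw [if_neg (fun h => hb ((hpartner b).mp h)), if_neg hb]; norm_num

end AuxRSS
section AuxRSS2

open scoped Classical

variable {N : ℕ} {W : Matrix (Fin N) (Fin N) ℝ}

lemma avgProj_mulVec (hsym : ∀ i j, W i j = W j i) {F : Finset (Fin N × Fin N)}
    (hF : IsContractedMatching W F) (x : Fin N → ℝ) :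
    avgProj F *ᵥ x =
      x - ∑ e ∈ F, ((x e.1 - x e.2) / 2) • (Pi.single e.1 (1:ℝ) - Pi.single e.2 1) := by
  have hdisj := matching_vertex_disjoint hsym hF
  funext a
  have hz : (x - ∑ e ∈ F, ((x e.1 - x e.2) / 2) • (Pi.single e.1 (1:ℝ) - Pi.single e.2 1)) a
      = x a - ∑ e ∈ F, ((x e.1 - x e.2) / 2) *
          ((Pi.single e.1 1 : Fin N → ℝ) a - (Pi.single e.2 1 : Fin N → ℝ) a) := by
    simp
  rw [hz]
  have hmv : (avgProj F *ᵥ x) a = ∑ b, avgProj F a b * x b := rfl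
  by_cases hmat : ∃ e ∈ F, a = e.1 ∨ a = e.2
  · obtain ⟨e₀, he₀, hae⟩ := hmat
    have hne0 : e₀.1 ≠ e₀.2 := (hF.1 e₀ he₀).1
    have hzsum : ∀ b₀ : Fin N,
        (∀ b, avgProj F a b = (if b = a then 1/2 else 0) + (if b = b₀ then 1/2 else 0)) →
        a ≠ b₀ →
        (avgProj F *ᵥ x) a = x a / 2 + x b₀ / 2 := by
      intro b₀ hrow hab0
      rw [hmv]
      have hterm : ∀ b, avgProj F a b * x b =
          (if b = a then x b / 2 else 0) + (if b = b₀ then x b / 2 else 0) := by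
        intro b
        rw [hrow b]
        by_cases h1 : b = a
        · subst h1
          simp [hab0]; ring
        · simp only [if_neg h1]
          by_cases h2 : b = b₀
          · simp only [if_pos h2]; ring
          · simp only [if_neg h2]; ring
      rw [Finset.sum_congr rfl fun b _ => hterm b, Finset.sum_add_distrib,
        Finset.sum_ite_eq', Finset.sum_ite_eq']
      simp
    have hsingle : ∀ e ∈ F, e ≠ e₀ →
        ((x e.1 - x e.2) / 2) * ((Pi.single e.1 1 : Fin N → ℝ) a - (Pi.single e.2 1 : Fin N → ℝ) a) = 0 := by
      intro e he hne
      have hd := hdisj e₀ he₀ e he (fun h => hne h.symm)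
      have h1 : a ≠ e.1 := by rcases hae with h | h <;> rw [h]; exacts [hd.1, hd.2.2.1]
      have h2 : a ≠ e.2 := by rcases hae with h | h <;> rw [h]; exacts [hd.2.1, hd.2.2.2]
      rw [Pi.single_eq_of_ne h1, Pi.single_eq_of_ne h2]
      ring
    rcases hae with h | h
    · subst h
      rw [hzsum e₀.2 (avgProj_row hsym hF he₀ (Or.inl ⟨rfl, rfl⟩)) hne0]
      rw [Finset.sum_eq_single e₀ (fun e he hne => hsingle e he hne) (fun h => absurd he₀ h)]
      rw [Pi.single_eq_same, Pi.single_eq_of_ne hne0]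
      ring
    · subst h
      rw [hzsum e₀.1 (avgProj_row hsym hF he₀ (Or.inr ⟨rfl, rfl⟩)) hne0.symm]
      rw [Finset.sum_eq_single e₀ (fun e he hne => hsingle e he hne) (fun h => absurd he₀ h)]
      rw [Pi.single_eq_same, Pi.single_eq_of_ne hne0.symm]
      ring
  · have hrow : ∀ b, avgProj F a b = if b = a then 1 else 0 := by
      intro b
      by_cases hd : a = b
      · subst hd
        simp only [avgProj, Matrix.of_apply, if_pos rfl]
        rw [if_neg hmat]
        simp
      · have hmem : ¬ ((a, b) ∈ F ∨ (b, a) ∈ F) := by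
          rintro (hb | hb)
          · exact hmat ⟨(a, b), hb, Or.inl rfl⟩
          · exact hmat ⟨(b, a), hb, Or.inr rfl⟩
        simp only [avgProj, Matrix.of_apply, if_neg hd, if_neg hmem]
        rw [if_neg (fun h : b = a => hd h.symm)]
    have hzero : ∀ e ∈ F,
        ((x e.1 - x e.2) / 2) * ((Pi.single e.1 1 : Fin N → ℝ) a - (Pi.single e.2 1 : Fin N → ℝ) a) = 0 := by
      intro e he
      have h1 : a ≠ e.1 := fun h => hmat ⟨e, he, Or.inl h⟩
      have h2 : a ≠ e.2 := fun h => hmat ⟨e, he, Or.inr h⟩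
      rw [Pi.single_eq_of_ne h1, Pi.single_eq_of_ne h2]
      ring
    rw [hmv, Finset.sum_congr rfl fun b _ => by rw [hrow b],
      Finset.sum_eq_zero hzero]
    simp [Finset.sum_ite_eq']
end AuxRSS2
section AuxRSS3

open scoped Classical

variable {N : ℕ} {W : Matrix (Fin N) (Fin N) ℝ}

lemma lap_symm (hW : IsWeightedGraph W) : (lap W)ᵀ = lap W := by
  show (Matrix.diagonal _ - W)ᵀ = _
  rw [Matrix.transpose_sub, Matrix.diagonal_transpose]
  congr 1
  ext i j
  exact hW.1 j i

lemma lap_swap (hW : IsWeightedGraph W) (v w : Fin N → ℝ) :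
    v ⬝ᵥ (lap W *ᵥ w) = w ⬝ᵥ (lap W *ᵥ v) := by
  rw [Matrix.dotProduct_mulVec, ← Matrix.mulVec_transpose, lap_symm hW,
    dotProduct_comm]

lemma lap_entry (W : Matrix (Fin N) (Fin N) ℝ) (i j : Fin N) :
    lap W i j = (if i = j then (∑ ℓ, W i ℓ) else 0) - W i j := by
  simp [lap, Matrix.sub_apply, Matrix.diagonal]

lemma avgProj_quadForm (hW : IsWeightedGraph W) {F : Finset (Fin N × Fin N)}
    (hF : IsContractedMatching W F) (x : Fin N → ℝ) (lam : ℝ)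
    (heig : lap W *ᵥ x = lam • x) (hunit : x ⬝ᵥ x = 1) :
    (avgProj F *ᵥ x) ⬝ᵥ (lap W *ᵥ (avgProj F *ᵥ x)) =
      lam + ∑ e ∈ F, (x e.1 - x e.2)^2/4 *
        ((∑ ℓ, W e.1 ℓ) + (∑ ℓ, W e.2 ℓ) + 2 * W e.1 e.2 - 4*lam) := by
  set u : Fin N × Fin N → (Fin N → ℝ) :=
    fun e => Pi.single e.1 (1:ℝ) - Pi.single e.2 1 with hu
  set c : Fin N × Fin N → ℝ := fun e => (x e.1 - x e.2)/2 with hc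
  set z : Fin N → ℝ := ∑ e ∈ F, c e • u e with hzdef
  have hy : avgProj F *ᵥ x = x - z := avgProj_mulVec hW.1 hF x
  have hdot : ∀ v : Fin N → ℝ, z ⬝ᵥ v = ∑ e ∈ F, c e * (u e ⬝ᵥ v) := by
    intro v
    rw [hzdef]
    simp only [dotProduct, Finset.sum_apply, Pi.smul_apply, smul_eq_mul, Finset.sum_mul]
    rw [Finset.sum_comm]
    refine Finset.sum_congr rfl fun e _ => ?_
    rw [Finset.mul_sum]
    exact Finset.sum_congr rfl fun k _ => by ring
  have huLu : ∀ e e' : Fin N × Fin N, u e ⬝ᵥ (lap W *ᵥ u e') =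
      lap W e.1 e'.1 - lap W e.1 e'.2 - lap W e.2 e'.1 + lap W e.2 e'.2 := by
    intro e e'
    rw [hu]
    simp only [Matrix.mulVec_sub, Matrix.mulVec_single_one, sub_dotProduct,
      dotProduct_sub, single_dotProduct, Matrix.col_apply]
    ring
  have hzLz : z ⬝ᵥ (lap W *ᵥ z) = ∑ e ∈ F, (c e)^2 *
      ((∑ ℓ, W e.1 ℓ) + (∑ ℓ, W e.2 ℓ) + 2 * W e.1 e.2) := by
    rw [hdot (lap W *ᵥ z)]
    refine Finset.sum_congr rfl fun e he => ?_
    rw [lap_swap hW (u e) z, hdot (lap W *ᵥ u e),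
      Finset.sum_eq_single e ?_ (fun h => absurd he h)]
    · rw [huLu e e, lap_entry, lap_entry, lap_entry, lap_entry]
      have hne : e.1 ≠ e.2 := (hF.1 e he).1
      rw [if_pos rfl, if_pos rfl, if_neg hne, if_neg hne.symm,
        hW.2.2 e.1, hW.2.2 e.2, hW.1 e.2 e.1]
      ring
    · intro e' he' hne
      have hd := matching_vertex_disjoint hW.1 hF e' he' e he hne
      obtain ⟨w1, w2, w3, w4⟩ := hF.2 e' he' e he hne
      rw [huLu e' e, lap_entry, lap_entry, lap_entry, lap_entry,
        if_neg hd.1, if_neg hd.2.1, if_neg hd.2.2.1, if_neg hd.2.2.2, w1, w2, w3, w4]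
      ring
  have hzx : z ⬝ᵥ x = ∑ e ∈ F, (x e.1 - x e.2)^2 / 2 := by
    rw [hdot x]
    refine Finset.sum_congr rfl fun e he => ?_
    rw [hu, hc]
    simp only [sub_dotProduct, single_dotProduct, one_mul]
    ring
  have hxLx : x ⬝ᵥ (lap W *ᵥ x) = lam := by
    rw [heig, dotProduct_smul, smul_eq_mul, hunit, mul_one]
  have hzLx : z ⬝ᵥ (lap W *ᵥ x) = lam * (z ⬝ᵥ x) := by
    rw [heig, dotProduct_smul, smul_eq_mul]
  have hxLz : x ⬝ᵥ (lap W *ᵥ z) = lam * (z ⬝ᵥ x) := by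
    rw [lap_swap hW x z, hzLx]
  rw [hy, Matrix.mulVec_sub, sub_dotProduct, dotProduct_sub,
    dotProduct_sub, hxLx, hxLz, hzLx, hzLz, hzx]
  have key : ∑ e ∈ F, (c e)^2 * ((∑ ℓ, W e.1 ℓ) + (∑ ℓ, W e.2 ℓ) + 2 * W e.1 e.2)
      - 2 * lam * ∑ e ∈ F, (x e.1 - x e.2)^2 / 2
      = ∑ e ∈ F, (x e.1 - x e.2)^2/4 *
        ((∑ ℓ, W e.1 ℓ) + (∑ ℓ, W e.2 ℓ) + 2 * W e.1 e.2 - 4*lam) := by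
    rw [Finset.mul_sum, ← Finset.sum_sub_distrib]
    refine Finset.sum_congr rfl fun e he => ?_
    rw [hc]
    ring
  linarith [key]

end AuxRSS3
section AuxRSS4

open scoped Classical

variable {N : ℕ} {W : Matrix (Fin N) (Fin N) ℝ}

lemma pair_sum (f : Fin N × Fin N → ℝ) (hdiag : ∀ e : Fin N × Fin N, e.1 = e.2 → f e = 0) :
    ∑ e : Fin N × Fin N, f e =
      ∑ e ∈ Finset.univ.filter (fun e : Fin N × Fin N => e.1 < e.2), (f e + f e.swap) := by
  rw [Finset.sum_add_distrib]
  have h2 : ∑ e ∈ Finset.univ.filter (fun e : Fin N × Fin N => e.1 < e.2), f e.swap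
      = ∑ e ∈ Finset.univ.filter (fun e : Fin N × Fin N => e.2 < e.1), f e := by
    refine Finset.sum_nbij' (fun e => e.swap) (fun e => e.swap) ?_ ?_ ?_ ?_ ?_
    · intro e he
      simp only [Finset.mem_filter, Finset.mem_univ, true_and] at he ⊢
      exact he
    · intro e he
      simp only [Finset.mem_filter, Finset.mem_univ, true_and] at he ⊢
      exact he
    · intro e _; simp
    · intro e _; simp
    · intro e _; rfl
  rw [h2]
  have h3 : ∑ e ∈ Finset.univ.filter (fun e : Fin N × Fin N => e.2 < e.1), f e
      = ∑ e ∈ Finset.univ.filter (fun e : Fin N × Fin N => ¬ e.1 < e.2), f e := by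
    refine Finset.sum_subset ?_ ?_
    · intro e he
      simp only [Finset.mem_filter, Finset.mem_univ, true_and] at he ⊢
      exact asymm he
    · intro e hmem hne
      simp only [Finset.mem_filter, Finset.mem_univ, true_and] at hmem hne
      exact hdiag e (le_antisymm (not_lt.mp hne) (not_lt.mp hmem))
  rw [h3, Finset.sum_filter_add_sum_filter_not]

end AuxRSS4
section AuxRSS5

open scoped Classical

variable {N : ℕ} {W : Matrix (Fin N) (Fin N) ℝ}

lemma sum_edge_sq (hW : IsWeightedGraph W) (x : Fin N → ℝ) :
    ∑ e : Fin N × Fin N, W e.1 e.2 * (x e.1 - x e.2)^2 = 2 * (x ⬝ᵥ (lap W *ᵥ x)) := by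
  have h1 : ∀ i, (lap W *ᵥ x) i = (∑ j, W i j) * x i - ∑ j, W i j * x j := by
    intro i
    simp only [lap, Matrix.sub_apply, Matrix.diagonal_apply, Matrix.mulVec, dotProduct,
      sub_mul, ite_mul, zero_mul]
    rw [Finset.sum_sub_distrib, Finset.sum_ite_eq]
    simp
  have hform : x ⬝ᵥ (lap W *ᵥ x) = ∑ i, ∑ j, (W i j * x i^2 - W i j * x i * x j) := by
    refine Finset.sum_congr rfl fun i _ => ?_
    rw [h1 i, mul_sub, Finset.sum_mul, Finset.mul_sum, Finset.mul_sum,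
      Finset.sum_sub_distrib]
    congr 1 <;> exact Finset.sum_congr rfl fun j _ => by ring
  rw [Fintype.sum_prod_type]
  have e1 : ∑ i, ∑ j, W i j * (x i - x j)^2
      = (∑ i, ∑ j, (W i j * x i^2 - W i j * x i * x j))
        + ∑ i, ∑ j, (W i j * x j^2 - W i j * x i * x j) := by
    rw [← Finset.sum_add_distrib]
    refine Finset.sum_congr rfl fun i _ => ?_
    rw [← Finset.sum_add_distrib]
    exact Finset.sum_congr rfl fun j _ => by ring
  have e2 : ∑ i, ∑ j, (W i j * x j^2 - W i j * x i * x j)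
      = ∑ i, ∑ j, (W i j * x i^2 - W i j * x i * x j) := by
    rw [Finset.sum_comm]
    refine Finset.sum_congr rfl fun i _ => Finset.sum_congr rfl fun j _ => ?_
    rw [hW.1 j i]
    ring
  rw [e1, e2, hform]
  ring

end AuxRSS5
open scoped Classical in
/-- for a finitely supported probability distribution `μ` (support `Ω`, weights
`p`) on contracted matchings of `G`, and a unit eigenvector `x` of `L` with eigenvalue `λ > 0`,
if `λ ≤ (d_i + d_j + 2 W(i,j))/4` for every edge `{i,j}` of `G`, and
`ϑ = max_{{i,j} ∈ E} q_{ij} (d_i + d_j + 2(W(i,j) − 2λ)) / W(i,j)` (expressed as a supremum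
over the edges of `G`), then for every `ε > 0`,
`μ({E_F : λ ≤ xᵀ Π_F L Π_F x ≤ (1+ε) λ}) ≥ 1 − ϑ/(4ε)`. -/
theorem rss_probability_bound {N : ℕ} (W : Matrix (Fin N) (Fin N) ℝ)
    (hW : IsWeightedGraph W)
    (Ω : Finset (Finset (Fin N × Fin N))) (p : Finset (Fin N × Fin N) → ℝ)
    (hmatch : ∀ F ∈ Ω, IsContractedMatching W F)
    (hp : ∀ F ∈ Ω, 0 ≤ p F) (hsum : ∑ F ∈ Ω, p F = 1)
    (x : Fin N → ℝ) (lam : ℝ) (hlampos : 0 < lam)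
    (heig : lap W *ᵥ x = lam • x) (hunit : x ⬝ᵥ x = 1)
    (hlam : ∀ i j : Fin N, i ≠ j → 0 < W i j →
      lam ≤ ((∑ ℓ, W i ℓ) + (∑ ℓ, W j ℓ) + 2 * W i j) / 4)
    (theta : ℝ)
    (htheta : theta = sSup { r : ℝ | ∃ i j : Fin N, i < j ∧ 0 < W i j ∧
      r = edgeProb Ω p i j *
        ((∑ ℓ, W i ℓ) + (∑ ℓ, W j ℓ) + 2 * (W i j - 2 * lam)) / W i j })
    (eps : ℝ) (heps : 0 < eps) :
    1 - theta / (4 * eps) ≤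
      ∑ F ∈ Ω.filter (fun F =>
          lam ≤ (avgProj F *ᵥ x) ⬝ᵥ (lap W *ᵥ (avgProj F *ᵥ x)) ∧
          (avgProj F *ᵥ x) ⬝ᵥ (lap W *ᵥ (avgProj F *ᵥ x)) ≤ (1 + eps) * lam),
        p F := by  classical
  set t : Fin N × Fin N → ℝ := fun e =>
    (x e.1 - x e.2)^2/4 * ((∑ ℓ, W e.1 ℓ) + (∑ ℓ, W e.2 ℓ) + 2 * W e.1 e.2 - 4*lam) with ht
  have hQ : ∀ F ∈ Ω, (avgProj F *ᵥ x) ⬝ᵥ (lap W *ᵥ (avgProj F *ᵥ x)) = lam + ∑ e ∈ F, t e :=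
    fun F hF => avgProj_quadForm hW (hmatch F hF) x lam heig hunit
  have htnn : ∀ (e : Fin N × Fin N), e.1 ≠ e.2 → 0 < W e.1 e.2 → 0 ≤ t e := by
    intro e hne hpos
    have h1 := hlam e.1 e.2 hne hpos
    simp only [ht]
    have hsq : (0:ℝ) ≤ (x e.1 - x e.2)^2/4 := by positivity
    have hbr : (0:ℝ) ≤ (∑ ℓ, W e.1 ℓ) + (∑ ℓ, W e.2 ℓ) + 2 * W e.1 e.2 - 4*lam := by
      linarith
    exact mul_nonneg hsq hbr
  have hsumtnn : ∀ F ∈ Ω, 0 ≤ ∑ e ∈ F, t e := fun F hF =>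
    Finset.sum_nonneg fun e he =>
      htnn e ((hmatch F hF).1 e he).1 ((hmatch F hF).1 e he).2
  have hQge : ∀ F ∈ Ω, lam ≤ (avgProj F *ᵥ x) ⬝ᵥ (lap W *ᵥ (avgProj F *ᵥ x)) := by
    intro F hF
    rw [hQ F hF]
    have := hsumtnn F hF
    linarith
  have hxLx : x ⬝ᵥ (lap W *ᵥ x) = lam := by
    rw [heig, dotProduct_smul, smul_eq_mul, hunit, mul_one]
  have hedgelam : ∑ e ∈ Finset.univ.filter (fun e : Fin N × Fin N => e.1 < e.2),
      W e.1 e.2 * (x e.1 - x e.2)^2 = lam := by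
    have hps := pair_sum (fun e : Fin N × Fin N => W e.1 e.2 * (x e.1 - x e.2)^2)
      (fun e h => by show W e.1 e.2 * (x e.1 - x e.2)^2 = 0; rw [h]; ring)
    have h2 : ∑ e : Fin N × Fin N, W e.1 e.2 * (x e.1 - x e.2)^2 = 2 * lam := by
      rw [sum_edge_sq hW x, hxLx]
    rw [h2] at hps
    have h3 : ∑ e ∈ Finset.univ.filter (fun e : Fin N × Fin N => e.1 < e.2),
        (W e.1 e.2 * (x e.1 - x e.2)^2
          + W e.swap.1 e.swap.2 * (x e.swap.1 - x e.swap.2)^2)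
        = ∑ e ∈ Finset.univ.filter (fun e : Fin N × Fin N => e.1 < e.2),
          2 * (W e.1 e.2 * (x e.1 - x e.2)^2) := by
      refine Finset.sum_congr rfl fun e _ => ?_
      simp only [Prod.fst_swap, Prod.snd_swap]
      rw [hW.1 e.2 e.1]
      ring
    rw [h3, ← Finset.mul_sum] at hps
    linarith
  set r : Fin N × Fin N → ℝ := fun e => ∑ F ∈ Ω.filter (fun F => e ∈ F), p F with hr
  have hE1 : ∑ F ∈ Ω, p F * ∑ e ∈ F, t e = ∑ e : Fin N × Fin N, r e * t e := by
    have hstep : ∀ F ∈ Ω, p F * ∑ e ∈ F, t e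
        = ∑ e : Fin N × Fin N, (if e ∈ F then p F * t e else 0) := by
      intro F _
      rw [Finset.sum_ite_mem, Finset.univ_inter, Finset.mul_sum]
    rw [Finset.sum_congr rfl hstep, Finset.sum_comm]
    refine Finset.sum_congr rfl fun e _ => ?_
    simp only [hr]
    rw [Finset.sum_filter, Finset.sum_mul]
    exact Finset.sum_congr rfl fun F _ => by rw [ite_mul, zero_mul]
  have hbdd : BddAbove { s : ℝ | ∃ i j : Fin N, i < j ∧ 0 < W i j ∧
      s = edgeProb Ω p i j *
        ((∑ ℓ, W i ℓ) + (∑ ℓ, W j ℓ) + 2 * (W i j - 2 * lam)) / W i j } := by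
    apply Set.Finite.bddAbove
    apply Set.Finite.subset (Set.finite_range (fun ij : Fin N × Fin N =>
      edgeProb Ω p ij.1 ij.2 *
        ((∑ ℓ, W ij.1 ℓ) + (∑ ℓ, W ij.2 ℓ) + 2 * (W ij.1 ij.2 - 2 * lam)) / W ij.1 ij.2))
    rintro s ⟨i, j, _, _, rfl⟩
    exact ⟨(i, j), rfl⟩
  have hterm : ∀ e ∈ Finset.univ.filter (fun e : Fin N × Fin N => e.1 < e.2),
      r e * t e + r e.swap * t e.swap
        ≤ theta * (W e.1 e.2 * (x e.1 - x e.2)^2 / 4) := by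
    intro e hef
    have hij : e.1 < e.2 := (Finset.mem_filter.mp hef).2
    have hne : e.1 ≠ e.2 := ne_of_lt hij
    by_cases hWe : 0 < W e.1 e.2
    · have htswap : t e.swap = t e := by
        simp only [ht, Prod.fst_swap, Prod.snd_swap]
        rw [hW.1 e.2 e.1]
        ring
      have hdisjf : Disjoint (Ω.filter fun F => (e.1, e.2) ∈ F)
          (Ω.filter fun F => (e.2, e.1) ∈ F) := by
        rw [Finset.disjoint_left]
        intro F hF1 hF2
        have h1 := Finset.mem_filter.mp hF1
        have h2 := Finset.mem_filter.mp hF2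
        have hneq : ((e.1, e.2) : Fin N × Fin N) ≠ (e.2, e.1) := by
          intro h
          exact hne (congrArg Prod.fst h)
        have hzero := ((hmatch F h1.1).2 (e.1, e.2) h1.2 (e.2, e.1) h2.2 hneq).1
        exact absurd hzero (ne_of_gt hWe)
      have hq : r e + r e.swap = edgeProb Ω p e.1 e.2 := by
        simp only [hr, edgeProb]
        rw [Finset.filter_or, Finset.sum_union hdisjf]
        rfl
      have hratio : edgeProb Ω p e.1 e.2 *
          ((∑ ℓ, W e.1 ℓ) + (∑ ℓ, W e.2 ℓ) + 2 * (W e.1 e.2 - 2 * lam)) / W e.1 e.2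
            ≤ theta := by
        rw [htheta]
        exact le_csSup hbdd ⟨e.1, e.2, hij, hWe, rfl⟩
      have hWne : W e.1 e.2 ≠ 0 := ne_of_gt hWe
      calc r e * t e + r e.swap * t e.swap = (r e + r e.swap) * t e := by
            rw [htswap]; ring
        _ = edgeProb Ω p e.1 e.2 * t e := by rw [hq]
        _ = (edgeProb Ω p e.1 e.2 *
              ((∑ ℓ, W e.1 ℓ) + (∑ ℓ, W e.2 ℓ) + 2 * (W e.1 e.2 - 2 * lam)) / W e.1 e.2)
            * (W e.1 e.2 * (x e.1 - x e.2)^2 / 4) := by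
            simp only [ht]
            field_simp
            ring
        _ ≤ theta * (W e.1 e.2 * (x e.1 - x e.2)^2 / 4) := by
            refine mul_le_mul_of_nonneg_right hratio ?_
            have := sq_nonneg (x e.1 - x e.2)
            positivity
    · have hW0 : W e.1 e.2 = 0 := le_antisymm (not_lt.mp hWe) (hW.2.1 e.1 e.2)
      have hr1 : r e = 0 := by
        have hemp : Ω.filter (fun F => e ∈ F) = ∅ :=
          Finset.filter_eq_empty_iff.mpr (fun {F} hF he =>
            absurd ((hmatch F hF).1 e he).2 (by rw [hW0]; exact lt_irrefl 0))
        simp [hr, hemp]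
      have hr2 : r e.swap = 0 := by
        have hemp : Ω.filter (fun F => e.swap ∈ F) = ∅ :=
          Finset.filter_eq_empty_iff.mpr (fun {F} hF he =>
            absurd ((hmatch F hF).1 e.swap he).2 (by
              simp only [Prod.fst_swap, Prod.snd_swap]
              rw [hW.1 e.2 e.1, hW0]
              exact lt_irrefl 0))
        simp [hr, hemp]
      rw [hr1, hr2, hW0]
      simp
  have hEbound : ∑ e : Fin N × Fin N, r e * t e ≤ theta * (lam / 4) := by
    have hps := pair_sum (fun e : Fin N × Fin N => r e * t e)
      (fun e h => by show r e * t e = 0; simp only [ht]; rw [h]; ring)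
    rw [hps]
    calc ∑ e ∈ Finset.univ.filter (fun e : Fin N × Fin N => e.1 < e.2),
          (r e * t e + r e.swap * t e.swap)
        ≤ ∑ e ∈ Finset.univ.filter (fun e : Fin N × Fin N => e.1 < e.2),
          theta * (W e.1 e.2 * (x e.1 - x e.2)^2 / 4) := Finset.sum_le_sum hterm
      _ = theta * (lam / 4) := by
          rw [← Finset.mul_sum, ← Finset.sum_div, hedgelam]
  have hsplit := Finset.sum_filter_add_sum_filter_not Ω (fun F =>
      lam ≤ (avgProj F *ᵥ x) ⬝ᵥ (lap W *ᵥ (avgProj F *ᵥ x)) ∧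
      (avgProj F *ᵥ x) ⬝ᵥ (lap W *ᵥ (avgProj F *ᵥ x)) ≤ (1 + eps) * lam) p
  rw [hsum] at hsplit
  have hbad : (∑ F ∈ Ω.filter (fun F => ¬ (lam ≤ (avgProj F *ᵥ x) ⬝ᵥ (lap W *ᵥ (avgProj F *ᵥ x)) ∧
      (avgProj F *ᵥ x) ⬝ᵥ (lap W *ᵥ (avgProj F *ᵥ x)) ≤ (1 + eps) * lam)), p F)
        * (eps * lam) ≤ theta * (lam/4) := by
    have h1 : ∀ F ∈ Ω.filter (fun F => ¬ (lam ≤ (avgProj F *ᵥ x) ⬝ᵥ (lap W *ᵥ (avgProj F *ᵥ x)) ∧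
        (avgProj F *ᵥ x) ⬝ᵥ (lap W *ᵥ (avgProj F *ᵥ x)) ≤ (1 + eps) * lam)),
        p F * (eps*lam) ≤ p F * ∑ e ∈ F, t e := by
      intro F hFb
      obtain ⟨hFΩ, hFc⟩ := Finset.mem_filter.mp hFb
      have hge := hQge F hFΩ
      have hlt : (1+eps)*lam < (avgProj F *ᵥ x) ⬝ᵥ (lap W *ᵥ (avgProj F *ᵥ x)) := by
        by_contra hle
        exact hFc ⟨hge, not_lt.mp hle⟩
      have hQF := hQ F hFΩ
      have hel : eps * lam ≤ ∑ e ∈ F, t e := by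
        rw [hQF] at hlt
        linarith
      exact mul_le_mul_of_nonneg_left hel (hp F hFΩ)
    calc (∑ F ∈ Ω.filter (fun F => ¬ (lam ≤ (avgProj F *ᵥ x) ⬝ᵥ (lap W *ᵥ (avgProj F *ᵥ x)) ∧
          (avgProj F *ᵥ x) ⬝ᵥ (lap W *ᵥ (avgProj F *ᵥ x)) ≤ (1 + eps) * lam)), p F) * (eps * lam)
        = ∑ F ∈ Ω.filter (fun F => ¬ (lam ≤ (avgProj F *ᵥ x) ⬝ᵥ (lap W *ᵥ (avgProj F *ᵥ x)) ∧
          (avgProj F *ᵥ x) ⬝ᵥ (lap W *ᵥ (avgProj F *ᵥ x)) ≤ (1 + eps) * lam)), p F * (eps * lam) := by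
          rw [Finset.sum_mul]
      _ ≤ ∑ F ∈ Ω.filter (fun F => ¬ (lam ≤ (avgProj F *ᵥ x) ⬝ᵥ (lap W *ᵥ (avgProj F *ᵥ x)) ∧
          (avgProj F *ᵥ x) ⬝ᵥ (lap W *ᵥ (avgProj F *ᵥ x)) ≤ (1 + eps) * lam)),
            p F * ∑ e ∈ F, t e := Finset.sum_le_sum h1
      _ ≤ ∑ F ∈ Ω, p F * ∑ e ∈ F, t e :=
          Finset.sum_le_sum_of_subset_of_nonneg (Finset.filter_subset _ _)
            (fun F hF _ => mul_nonneg (hp F hF) (hsumtnn F hF))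
      _ = ∑ e : Fin N × Fin N, r e * t e := hE1
      _ ≤ theta * (lam/4) := hEbound
  have hpos : (0:ℝ) < eps * lam := mul_pos heps hlampos
  have hbadle : (∑ F ∈ Ω.filter (fun F => ¬ (lam ≤ (avgProj F *ᵥ x) ⬝ᵥ (lap W *ᵥ (avgProj F *ᵥ x)) ∧
      (avgProj F *ᵥ x) ⬝ᵥ (lap W *ᵥ (avgProj F *ᵥ x)) ≤ (1 + eps) * lam)), p F)
        ≤ theta / (4*eps) := by
    have h2 := (le_div_iff₀ hpos).mpr hbad
    calc (∑ F ∈ Ω.filter (fun F => ¬ (lam ≤ (avgProj F *ᵥ x) ⬝ᵥ (lap W *ᵥ (avgProj F *ᵥ x)) ∧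
        (avgProj F *ᵥ x) ⬝ᵥ (lap W *ᵥ (avgProj F *ᵥ x)) ≤ (1 + eps) * lam)), p F)
        ≤ theta * (lam/4) / (eps * lam) := h2
      _ = theta / (4*eps) := by
          field_simp
  linarith
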